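/- arXiv:2305.06075 — 4 statements merged into one kernel-verified Lean document; each statement's English description precedes it below -/
import Mathlib

section
/- The image of pure morphisms in the runtime construction is central: for every morphism v : P ⟶ Q in C and every morphism x : R ⊗ A ⟶ R ⊗ B, the two interchange laws hold: (R ◁ (v ▷ A)) ≫ LW_Q x = LW_P x ≫ (R ◁ (v ▷ B)), and (R ◁ (A ◁ v)) ≫ RW_Q x = RW_P x ≫ (R ◁ (B ◁ v)). -/
open CategoryTheory MonoidalCategory

/-- Right whiskering in the runtime construction. -/
def RW {C : Type*} [Category C] [MonoidalCategory C]
    {R : C} (P : C) {A B : C} (x : R ⊗ A ⟶ R ⊗ B) :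
    R ⊗ (A ⊗ P) ⟶ R ⊗ (B ⊗ P) :=
  (α_ R A P).inv ≫ (x ▷ P) ≫ (α_ R B P).hom

/-- Left whiskering in the runtime construction, using the half-braiding of `R`. -/
def LW {C : Type*} [Category C] [MonoidalCategory C]
    {R : C} (b : HalfBraiding R) (P : C) {A B : C} (x : R ⊗ A ⟶ R ⊗ B) :
    R ⊗ (P ⊗ A) ⟶ R ⊗ (P ⊗ B) :=
  (α_ R P A).inv ≫ ((b.β P).hom ▷ A) ≫ (α_ P R A).hom ≫ (P ◁ x) ≫
    (α_ P R B).inv ≫ ((b.β P).inv ▷ B) ≫ (α_ R P B).hom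

theorem pure_is_central {C : Type*} [Category C] [MonoidalCategory C]
    {R : C} (b : HalfBraiding R) {P Q A B : C} (v : P ⟶ Q) (x : R ⊗ A ⟶ R ⊗ B) :
    (R ◁ (v ▷ A)) ≫ LW b Q x = LW b P x ≫ (R ◁ (v ▷ B)) ∧
    (R ◁ (A ◁ v)) ≫ RW Q x = RW P x ≫ (R ◁ (B ◁ v)) := by
  constructor
  · simp only [LW]
    rw [associator_inv_naturality_middle_assoc]
    have h : (b.β P).hom ≫ (v ▷ R) = (R ◁ v) ≫ (b.β Q).hom := (b.naturality v).symm
    slice_lhs 2 3 => rw [← comp_whiskerRight, ← h, comp_whiskerRight]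
    slice_lhs 3 4 => rw [associator_naturality_left]
    slice_lhs 4 5 => rw [← whisker_exchange]
    slice_lhs 5 6 => rw [associator_inv_naturality_left]
    have h2 : (v ▷ R) ≫ (b.β Q).inv = (b.β P).inv ≫ (R ◁ v) := by
      rw [Iso.comp_inv_eq, Category.assoc, Iso.eq_inv_comp]; exact h
    slice_lhs 6 7 => rw [← comp_whiskerRight, h2, comp_whiskerRight]
    slice_lhs 7 8 => rw [associator_naturality_middle]
    simp
  · simp only [RW]
    rw [associator_inv_naturality_right_assoc]
    slice_lhs 2 3 => rw [whisker_exchange]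
    slice_lhs 3 4 => rw [associator_naturality_right]
    simp
end

section
/- Left whiskerings compose up to the associator of C: for all objects P, Q and every morphism x : R ⊗ A ⟶ R ⊗ B, one has LW_{P ⊗ Q} x = (R ◁ (α_{P,Q,A}).hom) ≫ LW_P (LW_Q x) ≫ (R ◁ (α_{P,Q,B}).inv). -/
open CategoryTheory MonoidalCategory

lemma halfBraiding_monoidal_inv {C : Type*} [Category C] [MonoidalCategory C]
    {R : C} (b : HalfBraiding R) (U U' : C) :
    (b.β (U ⊗ U')).inv =
      (α_ U U' R).hom ≫ U ◁ (b.β U').inv ≫ (α_ U R U').inv ≫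
        (b.β U).inv ▷ U' ≫ (α_ R U U').hom := by
  rw [← cancel_epi (b.β (U ⊗ U')).hom, Iso.hom_inv_id, HalfBraiding.monoidal]
  simp

theorem lw_tensor {C : Type*} [Category C] [MonoidalCategory C]
    {R : C} (b : HalfBraiding R) (P Q : C) {A B : C} (x : R ⊗ A ⟶ R ⊗ B) :
    LW b (P ⊗ Q) x =
      (R ◁ (α_ P Q A).hom) ≫ LW b P (LW b Q x) ≫ (R ◁ (α_ P Q B).inv) := by
  simp only [LW]
  rw [HalfBraiding.monoidal, halfBraiding_monoidal_inv]
  monoidal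
end

section
/- In the theory of global state, writing a value and then running a process f equals running f on that value directly and writing the result: put ≫ run f = (R ◁ f) ≫ put, as morphisms R ⊗ X ⟶ R, for every f : X ⟶ X. -/
open CategoryTheory MonoidalCategory

/-- In the theory of global state, writing a value and then running a process `f`
equals running `f` on that value directly and writing the result. -/
theorem put_run
    {C : Type*} [Category C] [MonoidalCategory C]
    (R X : C) (copy : X ⟶ X ⊗ X) (discard : X ⟶ 𝟙_ C)
    (get : R ⟶ R ⊗ X) (put : R ⊗ X ⟶ R)
    (coassoc : copy ≫ (X ◁ copy) = copy ≫ (copy ▷ X) ≫ (α_ X X X).hom)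
    (counit_left : copy ≫ (discard ▷ X) ≫ (λ_ X).hom = 𝟙 X)
    (counit_right : copy ≫ (X ◁ discard) ≫ (ρ_ X).hom = 𝟙 X)
    (get_get : get ≫ (R ◁ copy) = get ≫ (get ▷ X) ≫ (α_ R X X).hom)
    (get_discard : get ≫ (R ◁ discard) ≫ (ρ_ R).hom = 𝟙 R)
    (put_put : (α_ R X X).inv ≫ (put ▷ X) ≫ put
        = (R ◁ ((discard ▷ X) ≫ (λ_ X).hom)) ≫ put)
    (get_put : get ≫ put = 𝟙 R)
    (put_get : put ≫ get = (R ◁ copy) ≫ (α_ R X X).inv ≫ (put ▷ X))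
    (f : X ⟶ X) :
    put ≫ (get ≫ (R ◁ f) ≫ put) = (R ◁ f) ≫ put := by
  have h : copy ≫ (X ◁ f) ≫ (discard ▷ X) ≫ (λ_ X).hom = f := by
    rw [whisker_exchange_assoc, MonoidalCategory.leftUnitor_naturality,
      ← Category.assoc, ← Category.assoc, Category.assoc copy, counit_left,
      Category.id_comp]
  calc put ≫ (get ≫ (R ◁ f) ≫ put)
      = (put ≫ get) ≫ (R ◁ f) ≫ put := by simp
    _ = (R ◁ copy) ≫ (α_ R X X).inv ≫ (put ▷ X) ≫ (R ◁ f) ≫ put := by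
        rw [put_get]; simp
    _ = (R ◁ copy) ≫ (α_ R X X).inv ≫ ((R ⊗ X) ◁ f) ≫ (put ▷ X) ≫ put := by
        rw [← whisker_exchange_assoc]
    _ = (R ◁ (copy ≫ (X ◁ f))) ≫ (α_ R X X).inv ≫ (put ▷ X) ≫ put := by
        rw [MonoidalCategory.whiskerLeft_comp, Category.assoc,
          associator_inv_naturality_right_assoc]
    _ = (R ◁ (copy ≫ (X ◁ f))) ≫ (R ◁ ((discard ▷ X) ≫ (λ_ X).hom)) ≫ put := by
        rw [put_put]
    _ = (R ◁ (copy ≫ (X ◁ f) ≫ (discard ▷ X) ≫ (λ_ X).hom)) ≫ put := by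
        simp [MonoidalCategory.whiskerLeft_comp]
    _ = (R ◁ f) ≫ put := by rw [h]
end

section
/- In the theory of global state, sequentially running two processes equals running their composite (the race-condition outcomes where the composition of both processes is preserved): for all f, g : X ⟶ X, run f ≫ run g = run (f ≫ g) as morphisms R ⟶ R. -/
open CategoryTheory MonoidalCategory

/-- In the theory of global state, sequentially running two processes equals
running their composite. -/
theorem run_run
    {C : Type*} [Category C] [MonoidalCategory C]
    (R X : C) (copy : X ⟶ X ⊗ X) (discard : X ⟶ 𝟙_ C)
    (get : R ⟶ R ⊗ X) (put : R ⊗ X ⟶ R)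
    (coassoc : copy ≫ (X ◁ copy) = copy ≫ (copy ▷ X) ≫ (α_ X X X).hom)
    (counit_left : copy ≫ (discard ▷ X) ≫ (λ_ X).hom = 𝟙 X)
    (counit_right : copy ≫ (X ◁ discard) ≫ (ρ_ X).hom = 𝟙 X)
    (get_get : get ≫ (R ◁ copy) = get ≫ (get ▷ X) ≫ (α_ R X X).hom)
    (get_discard : get ≫ (R ◁ discard) ≫ (ρ_ R).hom = 𝟙 R)
    (put_put : (α_ R X X).inv ≫ (put ▷ X) ≫ put
        = (R ◁ ((discard ▷ X) ≫ (λ_ X).hom)) ≫ put)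
    (get_put : get ≫ put = 𝟙 R)
    (put_get : put ≫ get = (R ◁ copy) ≫ (α_ R X X).inv ≫ (put ▷ X))
    (f g : X ⟶ X) :
    (get ≫ (R ◁ f) ≫ put) ≫ (get ≫ (R ◁ g) ≫ put)
      = get ≫ (R ◁ (f ≫ g)) ≫ put := by
  have key : copy ≫ (X ◁ g) ≫ (discard ▷ X) ≫ (λ_ X).hom = g := by
    rw [whisker_exchange_assoc, leftUnitor_naturality]
    rw [reassoc_of% counit_left]
  calc (get ≫ (R ◁ f) ≫ put) ≫ (get ≫ (R ◁ g) ≫ put)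
      = get ≫ (R ◁ f) ≫ (put ≫ get) ≫ (R ◁ g) ≫ put := by simp
    _ = get ≫ (R ◁ f) ≫ (R ◁ copy) ≫ (R ◁ (X ◁ g)) ≫
          (α_ R X X).inv ≫ (put ▷ X) ≫ put := by
        rw [put_get]
        simp only [Category.assoc]
        rw [← whisker_exchange_assoc, associator_inv_naturality_right_assoc]
    _ = get ≫ (R ◁ (f ≫ g)) ≫ put := by
        rw [put_put]
        simp only [← MonoidalCategory.whiskerLeft_comp_assoc, Category.assoc, key]
end
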